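/- Suppose τ_1 = 0, ε ∈ [0,1], η > 0, E_t ∈ [0,1] for all t, and whenever τ_t ≥ 1 we have E_t = 0. Then the projected update τ_{t+1} = max{0, τ_t + η(E_t − ε)} satisfies τ_t ≤ 1 + η for all t ≥ 1. -/

import Mathlib

/-! Below the threshold `b` a step raises `τ` by at most `η`, and at or above it the error is
zero, so the step cannot increase `τ`; hence `τ ≤ b + η` is preserved by every update. -/

theorem max_zero_add_mul_sub_le_of_threshold {b η ε e x : ℝ} (hb : 0 ≤ b) (hη : 0 ≤ η)
    (hε : 0 ≤ ε) (he : e ≤ 1) (hx : x ≤ b + η) (hsat : b ≤ x → e = 0) :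
    max 0 (x + η * (e - ε)) ≤ b + η := by
  refine max_le (by linarith) ?_
  rcases le_or_gt b x with hbx | hxb
  · rw [hsat hbx]
    linarith [mul_nonneg hη hε]
  · linarith [mul_le_mul_of_nonneg_left (show e - ε ≤ 1 by linarith) hη]

theorem projected_update_uniform_bound_general
    (η ε : ℝ) (hη : 0 < η) (hε0 : 0 ≤ ε)
    (E τ : ℕ → ℝ)
    (hE : ∀ t, 0 ≤ E t ∧ E t ≤ 1)
    (hE0 : ∀ t, 1 ≤ τ t → E t = 0)
    (hτ1 : τ 1 = 0)
    (hupd : ∀ t, τ (t + 1) = max 0 (τ t + η * (E t - ε))) :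
    ∀ t, 1 ≤ t → τ t ≤ 1 + η := by
  intro t ht
  induction t, ht using Nat.le_induction with
  | base => rw [hτ1]; linarith
  | succ n _ ih =>
    rw [hupd n]
    exact max_zero_add_mul_sub_le_of_threshold zero_le_one hη.le hε0 (hE n).2 ih (hE0 n)

/-- Uniform upper bound `τ_t ≤ 1 + η` for the projected threshold update. -/
theorem projected_update_uniform_bound
    (η ε : ℝ) (hη : 0 < η) (hε0 : 0 ≤ ε) (hε1 : ε ≤ 1)
    (E τ : ℕ → ℝ)
    (hE : ∀ t, 0 ≤ E t ∧ E t ≤ 1)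
    (hE0 : ∀ t, 1 ≤ τ t → E t = 0)
    (hτ1 : τ 1 = 0)
    (hupd : ∀ t, τ (t + 1) = max 0 (τ t + η * (E t - ε))) :
    ∀ t, 1 ≤ t → τ t ≤ 1 + η :=
  projected_update_uniform_bound_general η ε hη hε0 E τ hE hE0 hτ1 hupd
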